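/- Let Σ be a translating space-like graph in the Lorentz (n+1)-manifold M^n × ℝ, η a smooth compactly supported function on Σ, Θ = ⟨ν, ∂_s⟩ the angle function, and φ = ηΘ. Then div(η Θ² ∇η e^{cs}) = φ e^{cs} Lφ + Θ² |∇η|² e^{cs}, where L is the stability operator Lφ = Δφ − (|A|² + Ric̄(ν,ν))φ + c⟨∇φ, ∂_s⟩ and div is the divergence on Σ. -/

import Mathlib

open Real RealInnerProductSpace

/-!
Write `E = e^{cs}`, so that `∇E = cE ∂ₛᵀ`. Expanding the left side with the Leibniz rules gives
`E Θ² |∇η|² + ηΘE (Θ Δη + 2⟨∇η, ∇Θ⟩ + cΘ⟨∇η, ∂ₛ⟩)`. On the other hand the product rule for `L`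
gives `L(ηΘ) = η LΘ + Θ Δη + 2⟨∇η, ∇Θ⟩ + cΘ⟨∇η, ∂ₛ⟩`, and `LΘ = 0` on a translating graph,
so the bracket is exactly `Lφ`.
-/

structure IsLeibnizCalculus {S V : Type*} [NormedAddCommGroup V] [InnerProductSpace ℝ V]
    (grad : (S → ℝ) → S → V) (divg : (S → V) → S → ℝ) (lap : (S → ℝ) → S → ℝ) : Prop where
  divg_smul : ∀ (f : S → ℝ) (X : S → V) (p : S),
    divg (fun q => f q • X q) p = ⟪grad f p, X p⟫ + f p * divg X p
  divg_add : ∀ (X Y : S → V) (p : S), divg (fun q => X q + Y q) p = divg X p + divg Y p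
  divg_grad : ∀ (f : S → ℝ) (p : S), divg (grad f) p = lap f p
  grad_mul : ∀ (f g : S → ℝ) (p : S),
    grad (fun q => f q * g q) p = f p • grad g p + g p • grad f p

namespace IsLeibnizCalculus

variable {S V : Type*} [NormedAddCommGroup V] [InnerProductSpace ℝ V]
  {grad : (S → ℝ) → S → V} {divg : (S → V) → S → ℝ} {lap : (S → ℝ) → S → ℝ}

theorem lap_mul (h : IsLeibnizCalculus grad divg lap) (f g : S → ℝ) (p : S) :
    lap (fun q => f q * g q) p
      = f p * lap g p + g p * lap f p + 2 * ⟪grad f p, grad g p⟫ := by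
  have hgrad : grad (fun q => f q * g q) = fun q => f q • grad g q + g q • grad f q :=
    funext (h.grad_mul f g)
  rw [← h.divg_grad, hgrad, h.divg_add, h.divg_smul, h.divg_smul, h.divg_grad, h.divg_grad,
    real_inner_comm (grad g p)]
  ring

theorem schrodinger_mul (h : IsLeibnizCalculus grad divg lap) {L : (S → ℝ) → S → ℝ}
    {W : S → ℝ} {c : ℝ} {X : S → V}
    (hL : ∀ ψ p, L ψ p = lap ψ p - W p * ψ p + c * ⟪grad ψ p, X p⟫) (f g : S → ℝ) (p : S) :
    L (fun q => f q * g q) p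
      = f p * L g p + g p * lap f p + 2 * ⟪grad f p, grad g p⟫ + c * g p * ⟪grad f p, X p⟫ := by
  rw [hL, hL, h.lap_mul, h.grad_mul, inner_add_left, inner_smul_left, inner_smul_left]
  simp only [conj_trivial]
  ring

theorem divg_mul_sq_mul_smul_grad (h : IsLeibnizCalculus grad divg lap) {c : ℝ} {X : S → V}
    (η Θ E : S → ℝ) (hE : ∀ p, grad E p = (c * E p) • X p) (p : S) :
    divg (fun q => (η q * Θ q ^ 2 * E q) • grad η q) p
      = η p * Θ p * E p * (Θ p * lap η p + 2 * ⟪grad η p, grad Θ p⟫ + c * Θ p * ⟪grad η p, X p⟫)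
        + Θ p ^ 2 * ⟪grad η p, grad η p⟫ * E p := by
  have hsq : (fun q => Θ q ^ 2) = fun q => Θ q * Θ q := funext fun q => sq (Θ q)
  have hgrad : grad (fun q => η q * Θ q ^ 2 * E q) p
      = (η p * Θ p ^ 2) • (c * E p) • X p
        + E p • (η p • (Θ p • grad Θ p + Θ p • grad Θ p) + Θ p ^ 2 • grad η p) := by
    rw [h.grad_mul (fun q => η q * Θ q ^ 2), hE, h.grad_mul η, hsq, h.grad_mul]
  rw [h.divg_smul, hgrad, h.divg_grad]
  simp only [inner_add_left, inner_smul_left, conj_trivial, real_inner_comm (X p),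
    real_inner_comm (grad Θ p)]
  ring

end IsLeibnizCalculus

theorem divergence_identity_c14_general
    {S : Type*}
    {V : Type*} [NormedAddCommGroup V] [InnerProductSpace ℝ V]
    (c : ℝ)
    (hgt Θ Asq Ric : S → ℝ)
    (η : S → ℝ)
    (φ : S → ℝ) (hφ : ∀ p, φ p = η p * Θ p)
    (grad : (S → ℝ) → S → V)
    (divg : (S → V) → S → ℝ)
    (lap : (S → ℝ) → S → ℝ)
    (sT : S → V)
    (L : (S → ℝ) → S → ℝ)
    -- the stability operator, with `⟨∇ψ, ∂ₛ⟩ = ⟪∇ψ, sT⟫`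
    (hL : ∀ ψ p, L ψ p = lap ψ p - (Asq p + Ric p) * ψ p + c * ⟪grad ψ p, sT p⟫)
    -- calculus rules on `Σ`
    (hdiv_smul : ∀ (f : S → ℝ) (X : S → V) (p : S),
        divg (fun q => f q • X q) p = ⟪grad f p, X p⟫ + f p * divg X p)
    (hdiv_add : ∀ (X Y : S → V) (p : S),
        divg (fun q => X q + Y q) p = divg X p + divg Y p)
    (hlap : ∀ (f : S → ℝ) (p : S), divg (grad f) p = lap f p)
    (hgrad_mul : ∀ (f g : S → ℝ) (p : S),
        grad (fun q => f q * g q) p = f p • grad g p + g p • grad f p)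
    (hgrad_exp : ∀ p, grad (fun q => exp (c * hgt q)) p = (c * exp (c * hgt p)) • sT p)
    -- `Σ` is a translating space-like graph: `LΘ = 0` (equation (c-12))
    (hLΘ : ∀ p, L Θ p = 0) :
    ∀ p, divg (fun q => (η q * (Θ q) ^ 2 * exp (c * hgt q)) • grad η q) p
      = φ p * exp (c * hgt p) * L φ p
        + (Θ p) ^ 2 * ⟪grad η p, grad η p⟫ * exp (c * hgt p) := by
  intro p
  have hcalc : IsLeibnizCalculus grad divg lap := ⟨hdiv_smul, hdiv_add, hlap, hgrad_mul⟩
  have hLφ : L φ p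
      = Θ p * lap η p + 2 * ⟪grad η p, grad Θ p⟫ + c * Θ p * ⟪grad η p, sT p⟫ := by
    rw [show φ = fun q => η q * Θ q from funext hφ, hcalc.schrodinger_mul hL, hLΘ]
    ring
  rw [hcalc.divg_mul_sq_mul_smul_grad η Θ _ hgrad_exp, hLφ, hφ]

/-- **Equation (c-14).**  Let `Σ` be a translating space-like graph in the Lorentz
`(n+1)`-manifold `M^n × ℝ`, `η` a smooth compactly supported function on `Σ`,
`Θ = ⟨ν, ∂ₛ⟩` the angle function and `φ = ηΘ`.  Then
`div(ηΘ²∇η e^{cs}) = φ e^{cs} Lφ + Θ²|∇η|² e^{cs}`,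
where `L` is the stability operator `Lφ = Δφ - (|A|² + Ric̄(ν,ν))φ + c⟨∇φ, ∂ₛ⟩` and
`div` is the divergence on `Σ`.

The graph `Σ` is modelled by its carrier `S` with height function `hgt`, angle
function `Θ`, `Asq = |A|²` and `Ric = Ric̄(ν,ν)`; tangent vectors of `Σ` are
modelled by a real inner product space `V`, with gradient `grad`, divergence `divg`,
Laplacian `lap` and `sT` the tangential part of `∂ₛ` along `Σ` (so that
`⟨∇φ, ∂ₛ⟩ = ⟪∇φ, sT⟫`).  The hypotheses record the calculus rules on `Σ` (Leibniz
rules for `div` and `grad`, additivity of `div`, `Δ = div ∘ grad`,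
`∇e^{cs} = c e^{cs} sT`) and that `Σ` is translating, via the identity `LΘ = 0` of
equation (c-12). -/
theorem divergence_identity_c14
    {S : Type*} [TopologicalSpace S]
    {V : Type*} [NormedAddCommGroup V] [InnerProductSpace ℝ V]
    (n : ℕ) (hn : 2 ≤ n) (c : ℝ)
    (hgt Θ Asq Ric : S → ℝ)
    (η : S → ℝ) (hη : HasCompactSupport η)
    (φ : S → ℝ) (hφ : ∀ p, φ p = η p * Θ p)
    (grad : (S → ℝ) → S → V)
    (divg : (S → V) → S → ℝ)
    (lap : (S → ℝ) → S → ℝ)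
    (sT : S → V)
    (L : (S → ℝ) → S → ℝ)
    -- the stability operator, with `⟨∇ψ, ∂ₛ⟩ = ⟪∇ψ, sT⟫`
    (hL : ∀ ψ p, L ψ p = lap ψ p - (Asq p + Ric p) * ψ p + c * ⟪grad ψ p, sT p⟫)
    -- calculus rules on `Σ`
    (hdiv_smul : ∀ (f : S → ℝ) (X : S → V) (p : S),
        divg (fun q => f q • X q) p = ⟪grad f p, X p⟫ + f p * divg X p)
    (hdiv_add : ∀ (X Y : S → V) (p : S),
        divg (fun q => X q + Y q) p = divg X p + divg Y p)
    (hlap : ∀ (f : S → ℝ) (p : S), divg (grad f) p = lap f p)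
    (hgrad_mul : ∀ (f g : S → ℝ) (p : S),
        grad (fun q => f q * g q) p = f p • grad g p + g p • grad f p)
    (hgrad_exp : ∀ p, grad (fun q => exp (c * hgt q)) p = (c * exp (c * hgt p)) • sT p)
    -- `Σ` is a translating space-like graph: `LΘ = 0` (equation (c-12))
    (hLΘ : ∀ p, L Θ p = 0) :
    ∀ p, divg (fun q => (η q * (Θ q) ^ 2 * exp (c * hgt q)) • grad η q) p
      = φ p * exp (c * hgt p) * L φ p
        + (Θ p) ^ 2 * ⟪grad η p, grad η p⟫ * exp (c * hgt p) :=
  divergence_identity_c14_general c hgt Θ Asq Ric η φ hφ grad divg lap sT L hL hdiv_smul hdiv_add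
    hlap hgrad_mul hgrad_exp hLΘ
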